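/- Let β be a type and B a symmetric ℤ-bilinear form on β →₀ ℤ with B(single c 1, single c' 1) ≥ 0 for c ≠ c'. Let ∼ be a relation on β →₀ ℤ (linear equivalence) such that: (i) D ∼ D' implies B(D, single c 1) = B(D', single c 1) for all c; (ii) if D ∼ D' and c ∈ β then D - single c 1 ∼ D' - single c 1; (iii) if D ∼ 0 and D is ℕ-valued then D = 0. Let C : Fin m → β be distinct elements with B(single (C i) 1, single (C j) 1) = 0 for i ≠ j and B(single (C i) 1, single (C i) 1) < 0 for all i. Then for any a : Fin m → ℕ, every ℕ-valued D with D ∼ ∑ i, (a i) • single (C i) 1 satisfies D = ∑ i, (a i) • single (C i) 1. -/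
import Mathlib

theorem stmt_8 {β : Type*} (B : (β →₀ ℤ) →ₗ[ℤ] (β →₀ ℤ) →ₗ[ℤ] ℤ)
    (hsymm : ∀ x y, B x y = B y x)
    (hnonneg : ∀ c c' : β, c ≠ c' →
      0 ≤ B (Finsupp.single c 1) (Finsupp.single c' 1))
    (lineq : (β →₀ ℤ) → (β →₀ ℤ) → Prop)
    (h1 : ∀ D D', lineq D D' → ∀ c : β,
      B D (Finsupp.single c 1) = B D' (Finsupp.single c 1))
    (h2 : ∀ D D', lineq D D' → ∀ c : β,
      lineq (D - Finsupp.single c 1) (D' - Finsupp.single c 1))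
    (h3 : ∀ D : β →₀ ℤ, lineq D 0 → (∀ c, 0 ≤ D c) → D = 0)
    (m : ℕ) (C : Fin m → β) (hC : Function.Injective C)
    (horth : ∀ i j : Fin m, i ≠ j →
      B (Finsupp.single (C i) 1) (Finsupp.single (C j) 1) = 0)
    (hself : ∀ i : Fin m,
      B (Finsupp.single (C i) 1) (Finsupp.single (C i) 1) < 0)
    (a : Fin m → ℕ) (D : β →₀ ℕ)
    (hD : lineq (D.mapRange Int.ofNat rfl)
      (∑ i, (a i : ℤ) • Finsupp.single (C i) 1)) :
    D.mapRange Int.ofNat rfl = ∑ i, (a i : ℤ) • Finsupp.single (C i) 1 := by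
  -- expansion of B applied to a finsupp in the first slot
  have expand : ∀ (E : β →₀ ℤ) (y : β →₀ ℤ),
      B E y = ∑ x ∈ E.support, E x * B (Finsupp.single x 1) y := by
    intro E y
    conv_lhs => rw [← E.sum_single, Finsupp.sum]
    rw [map_sum, LinearMap.sum_apply]
    refine Finset.sum_congr rfl fun x _ => ?_
    have : Finsupp.single x (E x) = (E x) • Finsupp.single x (1 : ℤ) := by
      rw [Finsupp.smul_single, smul_eq_mul, mul_one]
    rw [this, map_smul, LinearMap.smul_apply, smul_eq_mul]
  have key : ∀ n : ℕ, ∀ a : Fin m → ℕ, ∀ D : β →₀ ℕ, (∑ i, a i) = n →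
      lineq (D.mapRange Int.ofNat rfl) (∑ i, (a i : ℤ) • Finsupp.single (C i) 1) →
      D.mapRange Int.ofNat rfl = ∑ i, (a i : ℤ) • Finsupp.single (C i) 1 := by
    intro n
    induction n with
    | zero =>
      intro a D hsum hl
      have ha : ∀ i, a i = 0 := by
        intro i
        have := (Finset.sum_eq_zero_iff.mp hsum) i (Finset.mem_univ i)
        exact this
      have hz : (∑ i, (a i : ℤ) • Finsupp.single (C i) (1:ℤ)) = 0 := by
        simp [ha]
      rw [hz] at hl ⊢
      exact h3 _ hl (fun c => by simp [Finsupp.mapRange_apply])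
    | succ n ih =>
      intro a D hsum hl
      obtain ⟨i, hi⟩ : ∃ i, 0 < a i := by
        by_contra h
        push_neg at h
        have : ∀ i, a i = 0 := fun i => Nat.le_zero.mp (h i)
        simp [this] at hsum
      set D' := D.mapRange Int.ofNat rfl with hD'def
      have hD'nonneg : ∀ c, 0 ≤ D' c := fun c => by
        simp [hD'def, Finsupp.mapRange_apply]
      have hBsum : B (∑ j, (a j : ℤ) • Finsupp.single (C j) 1) (Finsupp.single (C i) 1)
          = (a i : ℤ) * B (Finsupp.single (C i) 1) (Finsupp.single (C i) 1) := by
        rw [map_sum, LinearMap.sum_apply]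
        rw [Finset.sum_eq_single i]
        · rw [map_smul, LinearMap.smul_apply, smul_eq_mul]
        · intro j _ hj
          rw [map_smul, LinearMap.smul_apply, smul_eq_mul, horth j i hj, mul_zero]
        · intro h; exact absurd (Finset.mem_univ i) h
      have hneg : B D' (Finsupp.single (C i) 1) < 0 := by
        rw [h1 _ _ hl (C i), hBsum]
        exact mul_neg_of_pos_of_neg (by exact_mod_cast hi) (hself i)
      have hDCi : 0 < D (C i) := by
        by_contra h
        push_neg at h
        have hzero : D' (C i) = 0 := by
          simp [hD'def, Finsupp.mapRange_apply, Nat.le_zero.mp h]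
        have : 0 ≤ B D' (Finsupp.single (C i) 1) := by
          rw [expand]
          refine Finset.sum_nonneg fun x hx => ?_
          have hxne : x ≠ C i := by
            intro hxe; subst hxe
            exact (Finsupp.mem_support_iff.mp hx) hzero
          exact mul_nonneg (hD'nonneg x) (hnonneg x (C i) hxne)
        omega
      -- subtract single (C i) 1
      set E : β →₀ ℕ := D - Finsupp.single (C i) 1 with hEdef
      have hmap : E.mapRange Int.ofNat rfl = D' - Finsupp.single (C i) 1 := by
        ext c
        simp only [hEdef, hD'def, Finsupp.mapRange_apply, Finsupp.sub_apply,
          Finsupp.tsub_apply, Finsupp.single_apply]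
        by_cases hc : C i = c
        · subst hc; simp; omega
        · simp [hc]
      set a' : Fin m → ℕ := fun j => if j = i then a i - 1 else a j with ha'def
      have hsum' : ∑ j, a' j = n := by
        have step : (∑ j, a' j) + 1 = ∑ j, a j := by
          have h1' : (∑ j, if j = i then (1:ℕ) else 0) = 1 := by
            simp [Finset.sum_ite_eq']
          calc (∑ j, a' j) + 1 = (∑ j, a' j) + ∑ j, if j = i then (1:ℕ) else 0 := by
                rw [h1']
            _ = ∑ j, (a' j + if j = i then (1:ℕ) else 0) := by
                rw [Finset.sum_add_distrib]
            _ = ∑ j, a j := by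
                refine Finset.sum_congr rfl fun j _ => ?_
                by_cases hj : j = i
                · subst hj; simp [ha'def]; omega
                · simp [ha'def, hj]
        omega
      have hRHS' : (∑ j, (a' j : ℤ) • Finsupp.single (C j) (1:ℤ))
          = (∑ j, (a j : ℤ) • Finsupp.single (C j) (1:ℤ)) - Finsupp.single (C i) (1:ℤ) := by
        have hs : Finsupp.single (C i) (1:ℤ)
            = ∑ j, if j = i then Finsupp.single (C i) (1:ℤ) else 0 := by
          simp [Finset.sum_ite_eq']
        rw [hs, ← Finset.sum_sub_distrib]
        refine Finset.sum_congr rfl fun j _ => ?_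
        by_cases hj : j = i
        · subst hj
          simp only [ha'def, if_pos rfl]
          rw [show ((a j - 1 : ℕ) : ℤ) = (a j : ℤ) - 1 by omega, sub_smul, one_smul]
          simp
        · simp [ha'def, hj]
      have hl' : lineq (E.mapRange Int.ofNat rfl) (∑ j, (a' j : ℤ) • Finsupp.single (C j) (1:ℤ)) := by
        rw [hmap, hRHS']
        exact h2 _ _ hl (C i)
      have hE := ih a' E hsum' hl'
      have : D' = E.mapRange Int.ofNat rfl + Finsupp.single (C i) (1:ℤ) := by
        rw [hmap]; abel
      rw [this, hE, hRHS']
      abel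
  exact key (∑ i, a i) a D rfl hD
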